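/- arXiv:2502.03104 — 4 statements merged into one kernel-verified Lean document; each statement's English description precedes it below -/
import Mathlib

section
/- Let d be a probability vector on a finite state space S, P a row-stochastic matrix on S with dᵀP = dᵀ, γ ∈ (0,1), Φ an |S| × m real feature matrix, and D = diag(d). Define A = Φᵀ(D − ddᵀ)(I − γP)Φ. Then A + Aᵀ = (1 − γ²)·Cov(φ,φ) + Cov(φ − γφ', φ − γφ'), where under the joint law (s ∼ d, s' ∼ P(s,·)) one has Cov(φ,φ) = Φᵀ(D − ddᵀ)Φ and Cov(φ − γφ', φ − γφ') = E[(φ(s) − γφ(s'))(φ(s) − γφ(s'))ᵀ] − E[φ(s) − γφ(s')]E[φ(s) − γφ(s')]ᵀ. -/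
/-!
Under the joint law `J s s' = d s * P s s'` both marginals equal `d` (the rows of `P` sum to one
and `d` is stationary), so `φ(s)` and `φ(s')` have the same covariance `C = Φᵀ(D − ddᵀ)Φ`, and
their cross-covariance is `K = Φᵀ(D − ddᵀ)PΦ`. Hence `A = C − γK`, while bilinearity gives
`Cov(φ − γφ', φ − γφ') = (1 + γ²)C − γ(K + Kᵀ)`; the difference with `A + Aᵀ = 2C − γ(K + Kᵀ)`
is `(1 − γ²)C`.
-/

open Matrix BigOperators

section PairLaw

variable {R M S T : Type*} [Semiring R] [AddCommMonoid M] [Module R M] [Fintype S] [Fintype T]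

theorem sum_uncurry_smul_fst (J : S → T → R) (f : S → M) :
    ∑ q, Function.uncurry J q • f q.1 = ∑ s, (∑ t, J s t) • f s := by
  simp only [Fintype.sum_prod_type, Function.uncurry_apply_pair, ← Finset.sum_smul]

theorem sum_uncurry_smul_snd (J : S → T → R) (f : T → M) :
    ∑ q, Function.uncurry J q • f q.2 = ∑ t, (∑ s, J s t) • f t := by
  simp only [Fintype.sum_prod_type_right, Function.uncurry_apply_pair, ← Finset.sum_smul]

end PairLaw

namespace Matrix

variable {R ι n p S T : Type*} [CommRing R] [Fintype ι] [Fintype S] [Fintype T]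

def crossCov (w : ι → R) (x : ι → n → R) (y : ι → p → R) : Matrix n p R :=
  ∑ i, w i • vecMulVec (x i) (y i) - vecMulVec (∑ i, w i • x i) (∑ i, w i • y i)

theorem crossCov_transpose (w : ι → R) (x : ι → n → R) (y : ι → p → R) :
    (crossCov w x y)ᵀ = crossCov w y x := by
  simp only [crossCov, transpose_sub, transpose_sum, transpose_smul, transpose_vecMulVec]

theorem crossCov_sub_left (w : ι → R) (x x' : ι → n → R) (y : ι → p → R) :
    crossCov w (x - x') y = crossCov w x y - crossCov w x' y := by
  simp only [crossCov, Pi.sub_apply, sub_vecMulVec, smul_sub, Finset.sum_sub_distrib]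
  abel

theorem crossCov_sub_right (w : ι → R) (x : ι → n → R) (y y' : ι → p → R) :
    crossCov w x (y - y') = crossCov w x y - crossCov w x y' := by
  simp only [crossCov, Pi.sub_apply, vecMulVec_sub, smul_sub, Finset.sum_sub_distrib]
  abel

theorem crossCov_smul_left (w : ι → R) (c : R) (x : ι → n → R) (y : ι → p → R) :
    crossCov w (c • x) y = c • crossCov w x y := by
  simp only [crossCov, Pi.smul_apply, smul_vecMulVec, smul_comm (w _) c, ← Finset.smul_sum, smul_sub]

theorem crossCov_smul_right (w : ι → R) (c : R) (x : ι → n → R) (y : ι → p → R) :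
    crossCov w x (c • y) = c • crossCov w x y := by
  simp only [crossCov, Pi.smul_apply, vecMulVec_smul, smul_comm (w _) c, ← Finset.smul_sum, smul_sub]

theorem transpose_mul_mul_eq_sum (X : Matrix S n R) (J : Matrix S T R) (Y : Matrix T p R) :
    Xᵀ * J * Y = ∑ q : S × T, J q.1 q.2 • vecMulVec (X q.1) (Y q.2) := by
  ext i j
  simp only [mul_apply, transpose_apply, Finset.sum_mul, Fintype.sum_prod_type, Matrix.sum_apply,
    smul_apply, vecMulVec_apply, smul_eq_mul]
  rw [Finset.sum_comm]
  exact Finset.sum_congr rfl fun s _ => Finset.sum_congr rfl fun t _ => by ring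

theorem crossCov_eq_transpose_mul_mul [DecidableEq ι] (w : ι → R) (X : Matrix ι n R)
    (Y : Matrix ι p R) : crossCov w X Y = Xᵀ * (diagonal w - vecMulVec w w) * Y := by
  rw [Matrix.mul_sub, Matrix.sub_mul, transpose_mul_mul_eq_sum, Matrix.mul_assoc, vecMulVec_mul,
    mul_vecMulVec, mulVec_transpose, vecMul_eq_sum, vecMul_eq_sum, Fintype.sum_prod_type]
  simp only [diagonal_apply, ite_smul, zero_smul, Finset.sum_ite_eq, Finset.mem_univ, if_true, crossCov]

theorem crossCov_uncurry_comp_fst (J : S → T → R) (x : S → n → R) (y : S → p → R) :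
    crossCov (Function.uncurry J) (x ∘ Prod.fst) (y ∘ Prod.fst) =
      crossCov (fun s => ∑ t, J s t) x y := by
  simp only [crossCov, Function.comp_apply, sum_uncurry_smul_fst J (fun s => vecMulVec (x s) (y s)),
    sum_uncurry_smul_fst J x, sum_uncurry_smul_fst J y]

theorem crossCov_uncurry_comp_snd (J : S → T → R) (x : T → n → R) (y : T → p → R) :
    crossCov (Function.uncurry J) (x ∘ Prod.snd) (y ∘ Prod.snd) =
      crossCov (fun t => ∑ s, J s t) x y := by
  simp only [crossCov, Function.comp_apply, sum_uncurry_smul_snd J (fun t => vecMulVec (x t) (y t)),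
    sum_uncurry_smul_snd J x, sum_uncurry_smul_snd J y]

theorem crossCov_uncurry_comp_fst_comp_snd (J : S → T → R) (X : Matrix S n R)
    (Y : Matrix T p R) :
    crossCov (Function.uncurry J) (X ∘ Prod.fst) (Y ∘ Prod.snd) =
      Xᵀ * (of J - vecMulVec (fun s => ∑ t, J s t) (fun t => ∑ s, J s t)) * Y := by
  rw [Matrix.mul_sub, Matrix.sub_mul, transpose_mul_mul_eq_sum, Matrix.mul_assoc, vecMulVec_mul,
    mul_vecMulVec, mulVec_transpose, vecMul_eq_sum, vecMul_eq_sum, crossCov]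
  dsimp only [Function.comp]
  simp only [of_apply, ← Function.uncurry_apply_pair J, sum_uncurry_smul_fst J X,
    sum_uncurry_smul_snd J Y]

end Matrix

theorem A_plus_A_transpose_decomposition_general
    {S : Type*} [Fintype S] [DecidableEq S] {m : ℕ}
    (d : S → ℝ)
    (P : Matrix S S ℝ)
    (hP_row : ∀ s, ∑ s', P s s' = 1)
    (hstat : Matrix.vecMul d P = d)
    (γ : ℝ)
    (Φ : Matrix S (Fin m) ℝ) :
    let D : Matrix S S ℝ := Matrix.diagonal d
    let A : Matrix (Fin m) (Fin m) ℝ :=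
      Φᵀ * (D - vecMulVec d d) * (1 - γ • P) * Φ
    let Eψ : Fin m → ℝ := ∑ s, ∑ s', (d s * P s s') • (Φ s - γ • Φ s')
    let Covψ : Matrix (Fin m) (Fin m) ℝ :=
      (∑ s, ∑ s', (d s * P s s') • vecMulVec (Φ s - γ • Φ s') (Φ s - γ • Φ s')) -
        vecMulVec Eψ Eψ
    A + Aᵀ = (1 - γ ^ 2) • (Φᵀ * (D - vecMulVec d d) * Φ) + Covψ := by
  intro D A Eψ Covψ
  set J : S → S → ℝ := fun s s' => d s * P s s'
  have hrow : (fun s => ∑ s', J s s') = d := by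
    ext s
    simp only [J, ← Finset.mul_sum, hP_row, mul_one]
  have hcol : (fun s' => ∑ s, J s s') = d := hstat
  have hJ : (D - vecMulVec d d) * P = of J - vecMulVec d d := by
    rw [Matrix.sub_mul, vecMulVec_mul, hstat]
    congr 1
    ext s s'
    exact diagonal_mul d P s s'
  have hxx : crossCov (Function.uncurry J) (Φ ∘ Prod.fst) (Φ ∘ Prod.fst) =
      Φᵀ * (D - vecMulVec d d) * Φ := by
    rw [crossCov_uncurry_comp_fst J Φ Φ, hrow, crossCov_eq_transpose_mul_mul]
  have hyy : crossCov (Function.uncurry J) (Φ ∘ Prod.snd) (Φ ∘ Prod.snd) =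
      crossCov (Function.uncurry J) (Φ ∘ Prod.fst) (Φ ∘ Prod.fst) := by
    rw [crossCov_uncurry_comp_snd J Φ Φ, crossCov_uncurry_comp_fst J Φ Φ, hrow, hcol]
  have hxy : crossCov (Function.uncurry J) (Φ ∘ Prod.fst) (Φ ∘ Prod.snd) =
      Φᵀ * ((D - vecMulVec d d) * P) * Φ := by
    rw [crossCov_uncurry_comp_fst_comp_snd J Φ Φ, hrow, hcol, hJ]
  have hA : A = crossCov (Function.uncurry J) (Φ ∘ Prod.fst) (Φ ∘ Prod.fst) -
      γ • crossCov (Function.uncurry J) (Φ ∘ Prod.fst) (Φ ∘ Prod.snd) := by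
    simp only [A, hxx, hxy, Matrix.mul_sub, Matrix.sub_mul, Matrix.one_mul, Matrix.mul_smul,
      Matrix.smul_mul, Matrix.mul_assoc]
  have hCovψ : Covψ = crossCov (Function.uncurry J) (Φ ∘ Prod.fst - γ • (Φ ∘ Prod.snd))
      (Φ ∘ Prod.fst - γ • (Φ ∘ Prod.snd)) := by
    simp only [Covψ, Eψ, crossCov, Fintype.sum_prod_type, Function.uncurry_apply_pair,
      Pi.sub_apply, Pi.smul_apply]
    rfl
  rw [hA, hCovψ, ← hxx]
  simp only [crossCov_sub_left, crossCov_sub_right, crossCov_smul_left, crossCov_smul_right,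
    transpose_sub, transpose_smul, crossCov_transpose, hyy]
  module

/-- with `A = Φᵀ(D − ddᵀ)(I − γP)Φ`, one has
`A + Aᵀ = (1 − γ²)·Cov(φ,φ) + Cov(φ − γφ', φ − γφ')`, where
`Cov(φ,φ) = Φᵀ(D − ddᵀ)Φ` and the second covariance is taken under the joint law
`(s ∼ d, s' ∼ P(s,·))`. -/
theorem A_plus_A_transpose_decomposition
    {S : Type*} [Fintype S] [DecidableEq S] {m : ℕ}
    (d : S → ℝ) (hd_nonneg : ∀ s, 0 ≤ d s) (hd_sum : ∑ s, d s = 1)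
    (P : Matrix S S ℝ)
    (hP_nonneg : ∀ s s', 0 ≤ P s s') (hP_row : ∀ s, ∑ s', P s s' = 1)
    (hstat : Matrix.vecMul d P = d)
    (γ : ℝ) (hγ : γ ∈ Set.Ioo (0 : ℝ) 1)
    (Φ : Matrix S (Fin m) ℝ) :
    let D : Matrix S S ℝ := Matrix.diagonal d
    let A : Matrix (Fin m) (Fin m) ℝ :=
      Φᵀ * (D - vecMulVec d d) * (1 - γ • P) * Φ
    let Eψ : Fin m → ℝ := ∑ s, ∑ s', (d s * P s s') • (Φ s - γ • Φ s')
    let Covψ : Matrix (Fin m) (Fin m) ℝ :=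
      (∑ s, ∑ s', (d s * P s s') • vecMulVec (Φ s - γ • Φ s') (Φ s - γ • Φ s')) -
        vecMulVec Eψ Eψ
    A + Aᵀ = (1 - γ ^ 2) • (Φᵀ * (D - vecMulVec d d) * Φ) + Covψ :=
  A_plus_A_transpose_decomposition_general d P hP_row hstat γ Φ
end

section
/- Let d be a probability vector on a finite state space S, P a row-stochastic matrix on S with dᵀP = dᵀ, γ ∈ (0,1), Φ an |S| × m real feature matrix, and D = diag(d). Let A = Φᵀ(D − ddᵀ)(I − γP)Φ. Then A is positive semidefinite in the sense that xᵀAx ≥ 0 for every x ∈ ℝ^m; and if A is nonsingular, then A is positive definite: xᵀAx > 0 for every nonzero x ∈ ℝ^m. -/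
open Matrix

/-! With `y = Φx` and its `d`-centering `ỹ = y - (dᵀy) 𝟙`, the relations `P𝟙 = 𝟙` and
`dᵀP = dᵀ` make centering commute with `I - γP`, so `xᵀAx = ỹᵀD(I - γP)ỹ`. Jensen's inequality
row by row, followed by `dᵀP = dᵀ`, shows that `P` is a contraction for the seminorm
`‖u‖²_D = uᵀDu`; hence `xᵀAx ≥ (1 - γ)‖ỹ‖²_D ≥ 0`. If `xᵀAx = 0`, then `‖ỹ‖_D = ‖Pỹ‖_D = 0`, so
`Dỹ = DPỹ = 0` and `Ax = ΦᵀD(I - γP)ỹ = 0`; nonsingularity of `A` then forces `x = 0`. -/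

namespace CenteredTD

variable {S : Type*} [Fintype S]

def center (d u : S → ℝ) : S → ℝ := u - (d ⬝ᵥ u) • 1

lemma dotProduct_center {d : S → ℝ} (hd : ∑ s, d s = 1) (u : S → ℝ) :
    d ⬝ᵥ center d u = 0 := by
  simp [center, dotProduct_sub, dotProduct_smul, dotProduct_one, hd]

lemma center_mulVec {d : S → ℝ} {M : Matrix S S ℝ} {a : ℝ}
    (hright : M *ᵥ 1 = a • 1) (hleft : d ᵥ* M = a • d) (u : S → ℝ) :
    center d (M *ᵥ u) = M *ᵥ center d u := by
  simp only [center, mulVec_sub, mulVec_smul, hright, dotProduct_mulVec, hleft, smul_dotProduct,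
    smul_smul, smul_eq_mul, mul_comm]

lemma center_one_sub_smul_mulVec [DecidableEq S] {d : S → ℝ} {P : Matrix S S ℝ}
    (hP : P *ᵥ 1 = 1) (hstat : d ᵥ* P = d) (γ : ℝ) (u : S → ℝ) :
    center d ((1 - γ • P) *ᵥ u) = (1 - γ • P) *ᵥ center d u :=
  center_mulVec (a := 1 - γ) (by simp [sub_mulVec, smul_mulVec, hP, sub_smul])
    (by simp [vecMul_sub, vecMul_smul, hstat, sub_smul]) u

section Diagonal

variable [DecidableEq S]

lemma dotProduct_diagonal_mulVec (d u v : S → ℝ) :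
    u ⬝ᵥ (diagonal d *ᵥ v) = ∑ s, d s * (u s * v s) := by
  simp only [dotProduct, mulVec_diagonal]
  exact Finset.sum_congr rfl fun s _ => by ring

lemma diagonal_sub_vecMulVec_mulVec (d v : S → ℝ) :
    (diagonal d - vecMulVec d d) *ᵥ v = diagonal d *ᵥ center d v := by
  ext s
  simp [center, sub_mulVec, vecMulVec_mulVec, mulVec_diagonal]
  ring

lemma dotProduct_diagonal_sub_vecMulVec_mulVec {d : S → ℝ} (hd : ∑ s, d s = 1) (u v : S → ℝ) :
    u ⬝ᵥ ((diagonal d - vecMulVec d d) *ᵥ v) = center d u ⬝ᵥ (diagonal d *ᵥ center d v) := by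
  have hone : (1 : S → ℝ) ⬝ᵥ (diagonal d *ᵥ center d v) = 0 := by
    rw [dotProduct_diagonal_mulVec, ← dotProduct_center hd v]
    simp [dotProduct]
  rw [diagonal_sub_vecMulVec_mulVec, show center d u = u - (d ⬝ᵥ u) • 1 from rfl,
    sub_dotProduct, smul_dotProduct, hone, smul_zero, sub_zero]

variable {d : S → ℝ}

lemma dotProduct_diagonal_mulVec_self_nonneg (hd : ∀ s, 0 ≤ d s) (u : S → ℝ) :
    0 ≤ u ⬝ᵥ (diagonal d *ᵥ u) := by
  rw [dotProduct_diagonal_mulVec]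
  exact Finset.sum_nonneg fun s _ => mul_nonneg (hd s) (mul_self_nonneg _)

lemma two_mul_dotProduct_diagonal_mulVec_le (hd : ∀ s, 0 ≤ d s) (u v : S → ℝ) :
    2 * (u ⬝ᵥ (diagonal d *ᵥ v)) ≤ u ⬝ᵥ (diagonal d *ᵥ u) + v ⬝ᵥ (diagonal d *ᵥ v) := by
  have hsq := dotProduct_diagonal_mulVec_self_nonneg hd (u - v)
  simp only [mulVec_sub, dotProduct_sub, sub_dotProduct] at hsq
  have hsymm : v ⬝ᵥ (diagonal d *ᵥ u) = u ⬝ᵥ (diagonal d *ᵥ v) := by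
    simp only [dotProduct_diagonal_mulVec, mul_comm (v _)]
  linarith

lemma diagonal_mulVec_eq_zero_of_dotProduct_nonpos (hd : ∀ s, 0 ≤ d s) {u : S → ℝ}
    (h : u ⬝ᵥ (diagonal d *ᵥ u) ≤ 0) : diagonal d *ᵥ u = 0 := by
  have hsum := h.antisymm (dotProduct_diagonal_mulVec_self_nonneg hd u)
  rw [dotProduct_diagonal_mulVec] at hsum
  have hterm := (Finset.sum_eq_zero_iff_of_nonneg fun s _ =>
    mul_nonneg (hd s) (mul_self_nonneg (u s))).1 hsum
  ext s
  rcases mul_eq_zero.1 (hterm s (Finset.mem_univ s)) with h | h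
  · simp [mulVec_diagonal, h]
  · simp [mulVec_diagonal, mul_self_eq_zero.1 h]

variable {P : Matrix S S ℝ}

lemma sq_mulVec_le_mulVec_sq (hP : P ∈ rowStochastic ℝ S) (u : S → ℝ) (s : S) :
    (P *ᵥ u) s ^ 2 ≤ (P *ᵥ (u * u)) s := by
  have := Finset.sum_sq_le_sum_mul_sum_of_sq_le_mul Finset.univ
    (r := fun t => P s t * u t) (f := P s) (g := fun t => P s t * (u t * u t))
    (fun t _ => nonneg_of_mem_rowStochastic hP)
    (fun t _ => mul_nonneg (nonneg_of_mem_rowStochastic hP) (mul_self_nonneg _))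
    (fun t _ => (by ring : _ = _).le)
  simpa [mulVec, dotProduct, sum_row_of_mem_rowStochastic hP s] using this

lemma dotProduct_diagonal_mulVec_mulVec_le (hd : ∀ s, 0 ≤ d s) (hP : P ∈ rowStochastic ℝ S)
    (hstat : d ᵥ* P = d) (u : S → ℝ) :
    (P *ᵥ u) ⬝ᵥ (diagonal d *ᵥ (P *ᵥ u)) ≤ u ⬝ᵥ (diagonal d *ᵥ u) :=
  calc (P *ᵥ u) ⬝ᵥ (diagonal d *ᵥ (P *ᵥ u)) = ∑ s, d s * (P *ᵥ u) s ^ 2 := by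
        simp only [dotProduct_diagonal_mulVec, sq]
    _ ≤ ∑ s, d s * (P *ᵥ (u * u)) s :=
        Finset.sum_le_sum fun s _ =>
          mul_le_mul_of_nonneg_left (sq_mulVec_le_mulVec_sq hP u s) (hd s)
    _ = d ᵥ* P ⬝ᵥ (u * u) := by rw [← dotProduct_mulVec]; rfl
    _ = u ⬝ᵥ (diagonal d *ᵥ u) := by rw [hstat, dotProduct_diagonal_mulVec]; rfl

lemma one_sub_mul_le_dotProduct_diagonal_mulVec (hd : ∀ s, 0 ≤ d s)
    (hP : P ∈ rowStochastic ℝ S) (hstat : d ᵥ* P = d) {γ : ℝ} (hγ : 0 ≤ γ) (u : S → ℝ) :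
    (1 - γ) * (u ⬝ᵥ (diagonal d *ᵥ u)) ≤ u ⬝ᵥ (diagonal d *ᵥ ((1 - γ • P) *ᵥ u)) := by
  have hcross : u ⬝ᵥ (diagonal d *ᵥ (P *ᵥ u)) ≤ u ⬝ᵥ (diagonal d *ᵥ u) := by
    linarith [two_mul_dotProduct_diagonal_mulVec_le hd u (P *ᵥ u),
      dotProduct_diagonal_mulVec_mulVec_le hd hP hstat u]
  have := mul_le_mul_of_nonneg_left hcross hγ
  simp only [sub_mulVec, one_mulVec, smul_mulVec, mulVec_sub, mulVec_smul, dotProduct_sub,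
    dotProduct_smul, smul_eq_mul]
  linarith

lemma diagonal_mulVec_one_sub_smul_mulVec_eq_zero (hd : ∀ s, 0 ≤ d s)
    (hP : P ∈ rowStochastic ℝ S) (hstat : d ᵥ* P = d) {γ : ℝ} (hγ0 : 0 ≤ γ) (hγ1 : γ < 1)
    {u : S → ℝ} (h : u ⬝ᵥ (diagonal d *ᵥ ((1 - γ • P) *ᵥ u)) ≤ 0) :
    diagonal d *ᵥ ((1 - γ • P) *ᵥ u) = 0 := by
  have hu : u ⬝ᵥ (diagonal d *ᵥ u) ≤ 0 := by
    have := one_sub_mul_le_dotProduct_diagonal_mulVec hd hP hstat hγ0 u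
    by_contra! hpos
    linarith [mul_pos (sub_pos.2 hγ1) hpos]
  have hPu := (dotProduct_diagonal_mulVec_mulVec_le hd hP hstat u).trans hu
  rw [sub_mulVec, one_mulVec, smul_mulVec, mulVec_sub, mulVec_smul,
    diagonal_mulVec_eq_zero_of_dotProduct_nonpos hd hu,
    diagonal_mulVec_eq_zero_of_dotProduct_nonpos hd hPu, smul_zero, sub_zero]

end Diagonal

end CenteredTD

open CenteredTD in
/-- the matrix `A = Φᵀ(D − ddᵀ)(I − γP)Φ` is positive semidefinite
(`xᵀAx ≥ 0` for all `x`), and if it is nonsingular it is positive definite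
(`xᵀAx > 0` for all nonzero `x`). -/
theorem centered_td_matrix_psd_and_pd
    {S : Type*} [Fintype S] [DecidableEq S] {m : ℕ}
    (d : S → ℝ) (hd_nonneg : ∀ s, 0 ≤ d s) (hd_sum : ∑ s, d s = 1)
    (P : Matrix S S ℝ)
    (hP_nonneg : ∀ s s', 0 ≤ P s s') (hP_row : ∀ s, ∑ s', P s s' = 1)
    (hstat : Matrix.vecMul d P = d)
    (γ : ℝ) (hγ : γ ∈ Set.Ioo (0 : ℝ) 1)
    (Φ : Matrix S (Fin m) ℝ) :
    let A : Matrix (Fin m) (Fin m) ℝ :=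
      Φᵀ * (Matrix.diagonal d - vecMulVec d d) * (1 - γ • P) * Φ
    (∀ x : Fin m → ℝ, 0 ≤ x ⬝ᵥ A.mulVec x) ∧
      (IsUnit A.det → ∀ x : Fin m → ℝ, x ≠ 0 → 0 < x ⬝ᵥ A.mulVec x) := by
  intro A
  have hP : P ∈ rowStochastic ℝ S := mem_rowStochastic_iff_sum.2 ⟨hP_nonneg, hP_row⟩
  have hcenter := center_one_sub_smul_mulVec (one_vecMul_of_mem_rowStochastic hP) hstat γ
  have hA_mulVec (x : Fin m → ℝ) :
      A *ᵥ x = Φᵀ *ᵥ ((diagonal d - vecMulVec d d) *ᵥ ((1 - γ • P) *ᵥ (Φ *ᵥ x))) := by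
    simp only [A, ← mulVec_mulVec]
  have hquad (x : Fin m → ℝ) : x ⬝ᵥ A *ᵥ x =
      center d (Φ *ᵥ x) ⬝ᵥ (diagonal d *ᵥ ((1 - γ • P) *ᵥ center d (Φ *ᵥ x))) := by
    rw [hA_mulVec, dotProduct_mulVec, vecMul_transpose,
      dotProduct_diagonal_sub_vecMulVec_mulVec hd_sum, hcenter]
  refine ⟨fun x => ?_, fun hA x hx => ?_⟩
  · rw [hquad]
    exact (mul_nonneg (sub_nonneg.2 hγ.2.le)
      (dotProduct_diagonal_mulVec_self_nonneg hd_nonneg _)).trans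
        (one_sub_mul_le_dotProduct_diagonal_mulVec hd_nonneg hP hstat hγ.1.le _)
  · by_contra! hle
    rw [hquad] at hle
    refine hx (eq_zero_of_mulVec_eq_zero hA.ne_zero ?_)
    rw [hA_mulVec, diagonal_sub_vecMulVec_mulVec, hcenter,
      diagonal_mulVec_one_sub_smul_mulVec_eq_zero hd_nonneg hP hstat hγ.1.le hγ.2 hle, mulVec_zero]
end

section
/- Let 0 ≤ a ≤ 1 and 0 ≤ b ≤ 1 with 1 − a + b ≠ 0, let 0 ≤ x ≤ 1, 0 ≤ y ≤ 1, γ ∈ (0,1), and m, n ∈ ℝ. Let d_μ = (b/(1−a+b), (1−a)/(1−a+b))ᵀ, D = diag(d_μ), P_π = [[x, 1−x],[y, 1−y]], and Φ = (m, n)ᵀ ∈ ℝ^{2×1}. Then the 1 × 1 matrix A = Φᵀ(D − d_μ d_μᵀ)(I − γP_π)Φ equals the scalar ((1−a)b/(1−a+b)²) · (1 − xγ + yγ) · (m − n)². -/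
open Matrix

/-!
For a distribution `d = (p, q)` on two states, `D − d dᵀ = p q · uᵀ u` with `u = (1, −1)`, and
`u` is a left eigenvector of every row-stochastic `2 × 2` matrix `[[x, 1−x], [y, 1−y]]`, with
eigenvalue `x − y`. Hence `A = p q (1 − γ (x − y)) (u Φ)ᵀ (u Φ)` with `u Φ = m − n`.
-/

namespace TwoState

variable {R : Type*} [CommRing R]

variable (R) in
def contrast : Matrix (Fin 1) (Fin 2) R := !![1, -1]

theorem diagonal_sub_vecMulVec_eq_smul_contrast {p q : R} (h : p + q = 1) :
    diagonal ![p, q] - vecMulVec ![p, q] ![p, q] = (p * q) • ((contrast R)ᵀ * contrast R) := by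
  obtain rfl : q = 1 - p := eq_sub_of_add_eq' h
  ext i j
  fin_cases i <;> fin_cases j <;> simp [contrast, Matrix.mul_apply] <;> ring

theorem contrast_mul_stochastic (x y : R) :
    contrast R * !![x, 1 - x; y, 1 - y] = (x - y) • contrast R := by
  ext i j
  fin_cases i; fin_cases j <;> simp [contrast, Matrix.mul_apply]
  ring

theorem contrast_mul_one_sub_smul_stochastic (x y γ : R) :
    contrast R * (1 - γ • !![x, 1 - x; y, 1 - y]) = (1 - x * γ + y * γ) • contrast R := by
  rw [Matrix.mul_sub, Matrix.mul_one, Matrix.mul_smul, contrast_mul_stochastic]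
  module

theorem contrast_mul_col (m n : R) : contrast R * !![m; n] = !![m - n] := by
  ext i j
  fin_cases i; fin_cases j
  simp [contrast, sub_eq_add_neg]

end TwoState

open TwoState in
theorem two_state_ctd_matrix_value_general
    (a b x y γ m n : ℝ)
    (hden : 1 - a + b ≠ 0) :
    let dμ : Fin 2 → ℝ := ![b / (1 - a + b), (1 - a) / (1 - a + b)]
    let D : Matrix (Fin 2) (Fin 2) ℝ := Matrix.diagonal dμ
    let Pπ : Matrix (Fin 2) (Fin 2) ℝ := !![x, 1 - x; y, 1 - y]
    let Φ : Matrix (Fin 2) (Fin 1) ℝ := !![m; n]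
    Φᵀ * (D - vecMulVec dμ dμ) * (1 - γ • Pπ) * Φ =
      !![(1 - a) * b / (1 - a + b) ^ 2 * (1 - x * γ + y * γ) * (m - n) ^ 2] := by
  intro dμ D Pπ Φ
  have hsum : b / (1 - a + b) + (1 - a) / (1 - a + b) = 1 := by
    field_simp
    ring
  calc Φᵀ * (D - vecMulVec dμ dμ) * (1 - γ • Pπ) * Φ
      = (b / (1 - a + b) * ((1 - a) / (1 - a + b))) •
          ((contrast ℝ * Φ)ᵀ * (contrast ℝ * (1 - γ • Pπ)) * Φ) := by
        rw [diagonal_sub_vecMulVec_eq_smul_contrast hsum, transpose_mul]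
        simp only [Matrix.mul_smul, Matrix.smul_mul, Matrix.mul_assoc]
    _ = (b / (1 - a + b) * ((1 - a) / (1 - a + b)) * (1 - x * γ + y * γ)) •
          (!![m - n]ᵀ * !![m - n]) := by
        rw [contrast_mul_one_sub_smul_stochastic, Matrix.mul_smul, Matrix.smul_mul,
          Matrix.mul_assoc, contrast_mul_col, smul_smul]
    _ = _ := by
        ext i j
        fin_cases i; fin_cases j
        simp [Matrix.mul_apply]
        field_simp

/-- in the general two-state off-policy counterexample the
`1 × 1` matrix `A = Φᵀ(D − d_μd_μᵀ)(I − γP_π)Φ` equals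
`((1−a)b/(1−a+b)²)·(1 − xγ + yγ)·(m − n)²`. -/
theorem two_state_ctd_matrix_value
    (a b x y γ m n : ℝ)
    (ha : 0 ≤ a ∧ a ≤ 1) (hb : 0 ≤ b ∧ b ≤ 1) (hden : 1 - a + b ≠ 0)
    (hx : 0 ≤ x ∧ x ≤ 1) (hy : 0 ≤ y ∧ y ≤ 1)
    (hγ : γ ∈ Set.Ioo (0 : ℝ) 1) :
    let dμ : Fin 2 → ℝ := ![b / (1 - a + b), (1 - a) / (1 - a + b)]
    let D : Matrix (Fin 2) (Fin 2) ℝ := Matrix.diagonal dμ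
    let Pπ : Matrix (Fin 2) (Fin 2) ℝ := !![x, 1 - x; y, 1 - y]
    let Φ : Matrix (Fin 2) (Fin 1) ℝ := !![m; n]
    Φᵀ * (D - vecMulVec dμ dμ) * (1 - γ • Pπ) * Φ =
      !![(1 - a) * b / (1 - a + b) ^ 2 * (1 - x * γ + y * γ) * (m - n) ^ 2] :=
  two_state_ctd_matrix_value_general a b x y γ m n hden
end

section
/- (Two-state off-policy counterexample.) Let 0 ≤ a < 1 and 0 < b ≤ 1, let 0 ≤ x ≤ 1, 0 ≤ y ≤ 1, γ ∈ (0,1), and m, n ∈ ℝ with m ≠ 0, n ≠ 0, and m ≠ n. Let d_μ = (b/(1−a+b), (1−a)/(1−a+b))ᵀ, D = diag(d_μ), P_π = [[x, 1−x],[y, 1−y]], and Φ = (m, n)ᵀ ∈ ℝ^{2×1}. Then the 1 × 1 matrix A = Φᵀ(D − d_μ d_μᵀ)(I − γP_π)Φ is positive definite, i.e. its single entry is a strictly positive real number. -/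
/-!
For a distribution `d` on two states, `D - d dᵀ = d₀ d₁ u uᵀ` with `u = (1, -1)`, and `uᵀ` is a left
eigenvector of every row-stochastic `2 × 2` matrix `P`, with eigenvalue `P₀₀ - P₁₀ ∈ [-1, 1]`.
Hence `Φᵀ (D - d dᵀ)(I - γP) Φ = d₀ d₁ (1 - γ (P₀₀ - P₁₀)) (uᵀΦ)ᵀ(uᵀΦ)`, which for the target policy
is the positive number `d₀ d₁ (1 - γ (x - y)) (m - n)²`.
-/

open Matrix

section TwoState

variable {R : Type*} [CommRing R]

theorem diagonal_sub_vecMulVec_self_of_add_eq_one {d : Fin 2 → R} (hd : d 0 + d 1 = 1) :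
    diagonal d - vecMulVec d d = (d 0 * d 1) • vecMulVec ![1, -1] ![1, -1] := by
  have hd₁ : d 1 = 1 - d 0 := by linear_combination hd
  ext i j
  fin_cases i <;> fin_cases j <;> simp [vecMulVec_apply, hd₁] <;> ring

theorem vecMul_eq_smul_of_sum_row_eq_one {P : Matrix (Fin 2) (Fin 2) R}
    (hP : ∀ i, ∑ j, P i j = 1) :
    ![1, -1] ᵥ* P = (P 0 0 - P 1 0) • ![1, -1] := by
  have h0 := hP 0
  have h1 := hP 1
  simp only [Fin.sum_univ_two] at h0 h1
  ext j
  fin_cases j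
  · simp [vecMul, dotProduct, Fin.sum_univ_two]
    ring
  · simp [vecMul, dotProduct, Fin.sum_univ_two]
    linear_combination h0 - h1

theorem two_state_ctd_matrix_eq_smul_vecMulVec {ι : Type*} {d : Fin 2 → R}
    (hd : d 0 + d 1 = 1) {P : Matrix (Fin 2) (Fin 2) R} (hP : ∀ i, ∑ j, P i j = 1) (γ : R)
    (Φ : Matrix (Fin 2) ι R) :
    Φᵀ * (diagonal d - vecMulVec d d) * (1 - γ • P) * Φ =
      (d 0 * d 1 * (1 - γ * (P 0 0 - P 1 0))) • vecMulVec (![1, -1] ᵥ* Φ) (![1, -1] ᵥ* Φ) := by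
  have hu : ![1, -1] ᵥ* (1 - γ • P) = (1 - γ * (P 0 0 - P 1 0)) • ![(1 : R), -1] := by
    rw [vecMul_sub, vecMul_one, vecMul_smul, vecMul_eq_smul_of_sum_row_eq_one hP, smul_smul,
      sub_smul, one_smul]
  rw [diagonal_sub_vecMulVec_self_of_add_eq_one hd, Matrix.mul_smul, mul_vecMulVec,
    mulVec_transpose, Matrix.smul_mul, vecMulVec_mul, hu, Matrix.smul_mul, vecMulVec_mul,
    smul_vecMul, vecMulVec_smul, smul_smul]

end TwoState

theorem two_state_ctd_matrix_pos_def_general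
    (a b x y γ m n : ℝ)
    (ha : 0 ≤ a ∧ a < 1) (hb : 0 < b ∧ b ≤ 1)
    (hx : 0 ≤ x ∧ x ≤ 1) (hy : 0 ≤ y ∧ y ≤ 1)
    (hγ : γ ∈ Set.Ioo (0 : ℝ) 1)
    (hmn : m ≠ n) :
    let dμ : Fin 2 → ℝ := ![b / (1 - a + b), (1 - a) / (1 - a + b)]
    let D : Matrix (Fin 2) (Fin 2) ℝ := Matrix.diagonal dμ
    let Pπ : Matrix (Fin 2) (Fin 2) ℝ := !![x, 1 - x; y, 1 - y]
    let Φ : Matrix (Fin 2) (Fin 1) ℝ := !![m; n]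
    let A : Matrix (Fin 1) (Fin 1) ℝ := Φᵀ * (D - vecMulVec dμ dμ) * (1 - γ • Pπ) * Φ
    0 < A 0 0 := by
  intro dμ D Pπ Φ A
  have hs : 0 < 1 - a + b := by linarith
  have hdμ : dμ 0 + dμ 1 = 1 := by
    simp only [dμ, Matrix.cons_val_zero, Matrix.cons_val_one]
    field_simp
    ring
  have hPπ : ∀ i, ∑ j, Pπ i j = 1 := by
    intro i
    fin_cases i <;> simp [Pπ]
  have hA : A 0 0 = dμ 0 * dμ 1 * (1 - γ * (x - y)) * (m - n) ^ 2 := by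
    simp only [A, D, two_state_ctd_matrix_eq_smul_vecMulVec hdμ hPπ, Matrix.smul_apply,
      vecMulVec_apply, smul_eq_mul]
    simp only [Pπ, Φ, vecMul, dotProduct, Fin.sum_univ_two, of_apply, cons_val', cons_val_zero,
      cons_val_one, empty_val', cons_val_fin_one]
    ring
  have hdμ₀ : 0 < dμ 0 := div_pos hb.1 hs
  have hdμ₁ : 0 < dμ 1 := div_pos (by linarith) hs
  have hγxy : 0 < 1 - γ * (x - y) := by nlinarith [hγ.1, hγ.2]
  rw [hA]
  have hmn' : m - n ≠ 0 := sub_ne_zero.2 hmn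
  positivity

/-- two-state off-policy counterexample: under the stated
conditions the `1 × 1` matrix `A = Φᵀ(D − d_μd_μᵀ)(I − γP_π)Φ` is positive
definite, i.e. its single entry is strictly positive. -/
theorem two_state_ctd_matrix_pos_def
    (a b x y γ m n : ℝ)
    (ha : 0 ≤ a ∧ a < 1) (hb : 0 < b ∧ b ≤ 1)
    (hx : 0 ≤ x ∧ x ≤ 1) (hy : 0 ≤ y ∧ y ≤ 1)
    (hγ : γ ∈ Set.Ioo (0 : ℝ) 1)
    (hm : m ≠ 0) (hn : n ≠ 0) (hmn : m ≠ n) :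
    let dμ : Fin 2 → ℝ := ![b / (1 - a + b), (1 - a) / (1 - a + b)]
    let D : Matrix (Fin 2) (Fin 2) ℝ := Matrix.diagonal dμ
    let Pπ : Matrix (Fin 2) (Fin 2) ℝ := !![x, 1 - x; y, 1 - y]
    let Φ : Matrix (Fin 2) (Fin 1) ℝ := !![m; n]
    let A : Matrix (Fin 1) (Fin 1) ℝ := Φᵀ * (D - vecMulVec dμ dμ) * (1 - γ • Pπ) * Φ
    0 < A 0 0 :=
  two_state_ctd_matrix_pos_def_general a b x y γ m n ha hb hx hy hγ hmn
end
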